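/- G contains a triangle if and only if S[G,t] contains a triangle, for every simple graph G and t ≥ 1. -/

import Mathlib

variable {V : Type*}

/-- Adjacency of the generalized Sierpiński graph `S(G,t)` on words of length `t`:
`u` and `v` are adjacent iff there is an index `i` with `u j = v j` for `j < i`,
`u i` adjacent to `v i` in `G`, and `u j = v i`, `v j = u i` for `j > i`. -/
def sierAdj (G : SimpleGraph V) (t : ℕ) (u v : Fin t → V) : Prop :=
  ∃ i : Fin t, (∀ j, j < i → u j = v j) ∧ G.Adj (u i) (v i) ∧
    ∀ j, i < j → u j = v i ∧ v j = u i

/-- The generalized Sierpiński graph `S(G,t)`. -/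
def sier (G : SimpleGraph V) (t : ℕ) : SimpleGraph (Fin t → V) where
  Adj := sierAdj G t
  symm := by
    refine ⟨?_⟩; rintro u v ⟨i, h1, h2, h3⟩
    exact ⟨i, fun j hj => (h1 j hj).symm, h2.symm,
      fun j hj => ⟨(h3 j hj).2, (h3 j hj).1⟩⟩
  loopless := by
    refine ⟨?_⟩; rintro u ⟨i, h1, h2, h3⟩
    exact G.loopless.irrefl _ h2

/-- `linkingAt G t p u v` : `uv` is a linking edge of `S(G,t)` appearing at
(0-indexed) position `p < t - 1`; in the paper's terminology this linking edge is
produced at step `t - p`, and its contraction is a vertex contracted at step `t - p`. -/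
def linkingAt (G : SimpleGraph V) (t p : ℕ) (u v : Fin t → V) : Prop :=
  ∃ i : Fin t, i.val = p ∧ i.val + 1 < t ∧ (∀ j, j < i → u j = v j) ∧
    G.Adj (u i) (v i) ∧ ∀ j, i < j → u j = v i ∧ v j = u i

/-- `uv` is a linking edge of `S(G,t)` (an edge appearing at some step `≥ 2`). -/
def linking (G : SimpleGraph V) (t : ℕ) (u v : Fin t → V) : Prop :=
  ∃ p, linkingAt G t p u v

/-- The equivalence relation on words generated by identifying the two endpoints
of each linking edge. -/
def gasketSetoid (G : SimpleGraph V) (t : ℕ) : Setoid (Fin t → V) :=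
  Relation.EqvGen.setoid (linking G t)

/-- The generalized Sierpiński gasket graph `S[G,t]`, obtained from `S(G,t)` by
contracting all linking edges. -/
def gasket (G : SimpleGraph V) (t : ℕ) :
    SimpleGraph (Quotient (gasketSetoid G t)) where
  Adj x y := x ≠ y ∧ ∃ u v, Quotient.mk (gasketSetoid G t) u = x ∧
    Quotient.mk (gasketSetoid G t) v = y ∧ sierAdj G t u v
  symm := by
    refine ⟨?_⟩; rintro x y ⟨hxy, u, v, hu, hv, h⟩
    exact ⟨hxy.symm, v, u, hv, hu, (sier G t).symm.symm _ _ h⟩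
  loopless := ⟨fun _ h => h.1 rfl⟩

/-- The expanded word `i j j ... j`; for `ij ∈ E(G)` its class in `S[G,t]` is the
contracted vertex `{i,j}_t`. -/
def topWord (t : ℕ) (i j : V) : Fin t → V := fun k => if k.val = 0 then i else j

/-!
Write `t = n + 1`. A vertex of `S[G,t]` is a word or a linking pair of words, and every edge of
`S[G,t]` joins two words that differ only in their last letter, by an edge of `G`. A triangle of
`S[G,t]` therefore yields three such sibling pairs, arranged cyclically, consecutive pairs being
equal or linked. If no link occurs, the three last letters form a triangle of `G`. Otherwise let
`m` be the smallest position of a link and read every word at position `m`: links at `m` move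
this letter along an edge of `G`, everything else preserves it. One link at `m` is impossible;
two are impossible because their last letters would collapse a sibling pair; three give a
triangle of `G`. Conversely `x ↦ [p x]` maps `G` into `S[G,t]` for every prefix `p`.
-/

open SimpleGraph

theorem SimpleGraph.not_cliqueFree_three_iff {W : Type*} {H : SimpleGraph W} :
    ¬ H.CliqueFree 3 ↔ ∃ x : Fin 3 → W, ∀ k, H.Adj (x k) (x (k + 1)) := by
  classical
  refine ⟨fun h => ?_, fun ⟨x, hx⟩ h => ?_⟩
  · obtain ⟨s, hs⟩ := not_forall_not.mp h
    obtain ⟨a, b, c, hab, hac, hbc, -⟩ := is3Clique_iff.mp hs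
    exact ⟨![a, b, c], fun k => by fin_cases k; exacts [hab, hbc, hac.symm]⟩
  · exact h {x 0, x 1, x 2} (is3Clique_triple_iff.mpr ⟨hx 0, (hx 2).symm, hx 1⟩)

theorem adj_of_cyclic_steps {G : SimpleGraph V} {α A B : Fin 3 → V}
    (hAB : ∀ k, G.Adj (A k) (B k))
    (hα : ∀ k, α k = α (k + 1) ∨
      G.Adj (α k) (α (k + 1)) ∧ A (k + 1) = α k ∧ B k = α (k + 1))
    (hne : ∃ k, α k ≠ α (k + 1)) (k : Fin 3) : G.Adj (α k) (α (k + 1)) := by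
  -- A single adjacent step cannot close the cycle; two adjacent steps around an equal one
  -- force `A j = B j` for the pair `j` between them.
  have := hα 0; have := hα 1; have := hα 2
  have := hAB 0; have := hAB 1; have := hAB 2
  obtain ⟨k₀, hk₀⟩ := hne
  fin_cases k₀ <;> fin_cases k <;> grind [SimpleGraph.Adj.ne]

structure SierAdjAt (G : SimpleGraph V) {t : ℕ} (i : Fin t) (u v : Fin t → V) : Prop where
  eq_of_lt : ∀ j, j < i → u j = v j
  adj : G.Adj (u i) (v i)
  left_of_gt : ∀ j, i < j → u j = v i
  right_of_gt : ∀ j, i < j → v j = u i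

section Words

variable {G : SimpleGraph V} {t : ℕ} {i : Fin t} {u v : Fin t → V}

theorem sierAdjAt_iff : SierAdjAt G i u v ↔ (∀ j, j < i → u j = v j) ∧ G.Adj (u i) (v i) ∧
    ∀ j, i < j → u j = v i ∧ v j = u i :=
  ⟨fun h => ⟨h.eq_of_lt, h.adj, fun j hj => ⟨h.left_of_gt j hj, h.right_of_gt j hj⟩⟩,
    fun ⟨h₁, h₂, h₃⟩ => ⟨h₁, h₂, fun j hj => (h₃ j hj).1, fun j hj => (h₃ j hj).2⟩⟩

theorem sierAdj_iff_exists_sierAdjAt : sierAdj G t u v ↔ ∃ i, SierAdjAt G i u v :=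
  exists_congr fun _ => sierAdjAt_iff.symm

theorem SierAdjAt.symm (h : SierAdjAt G i u v) : SierAdjAt G i v u :=
  ⟨fun j hj => (h.eq_of_lt j hj).symm, h.adj.symm, h.right_of_gt, h.left_of_gt⟩

end Words

section Gasket

variable {G : SimpleGraph V} {n : ℕ} {i i' : Fin (n + 1)} {u v w : Fin (n + 1) → V}

def Linked (G : SimpleGraph V) (u v : Fin (n + 1) → V) : Prop :=
  ∃ i < Fin.last n, SierAdjAt G i u v

theorem linking_iff_linked : linking G (n + 1) u v ↔ Linked G u v := by
  simp only [linking, linkingAt, Linked, sierAdjAt_iff, Fin.lt_def, Fin.val_last]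
  constructor
  · rintro ⟨_, i, -, hi, h⟩
    exact ⟨i, by omega, h⟩
  · rintro ⟨i, hi, h⟩
    exact ⟨i, i, rfl, by omega, h⟩

theorem Linked.symm (h : Linked G u v) : Linked G v u :=
  let ⟨i, hi, h⟩ := h
  ⟨i, hi, h.symm⟩

theorem not_linked_of_forall_lt_last (h : ∀ j < Fin.last n, u j = v j) : ¬ Linked G u v :=
  fun ⟨i, hi, hl⟩ => hl.adj.ne (h i hi)

/-- The letter `w (last n)` determines the position of a link at `w`. -/
theorem SierAdjAt.le_of_sierAdjAt (h : SierAdjAt G i w u) (h' : SierAdjAt G i' w v)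
    (hi' : i' < Fin.last n) : i' ≤ i := by
  refine not_lt.mp fun hii' => h'.adj.ne ?_
  calc w i' = u i := h.left_of_gt i' hii'
    _ = w (Fin.last n) := (h.left_of_gt _ (hii'.trans hi')).symm
    _ = v i' := h'.left_of_gt _ hi'

theorem Linked.unique (h : Linked G w u) (h' : Linked G w v) : u = v := by
  obtain ⟨i, hi, h⟩ := h
  obtain ⟨i', hi', h'⟩ := h'
  obtain rfl : i = i' :=
    le_antisymm (h'.le_of_sierAdjAt h hi) (h.le_of_sierAdjAt h' hi')
  funext j
  rcases lt_trichotomy j i with hj | rfl | hj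
  · exact (h.eq_of_lt j hj).symm.trans (h'.eq_of_lt j hj)
  · exact (h.left_of_gt _ hi).symm.trans (h'.left_of_gt _ hi)
  · exact (h.right_of_gt j hj).trans (h'.right_of_gt j hj).symm

theorem equivalence_eq_or_linked :
    Equivalence fun u v : Fin (n + 1) → V => u = v ∨ Linked G u v where
  refl _ := Or.inl rfl
  symm := by
    rintro u v (rfl | h)
    exacts [Or.inl rfl, Or.inr h.symm]
  trans := by
    rintro u v w (rfl | huv) (rfl | hvw)
    exacts [Or.inl rfl, Or.inr hvw, Or.inr huv, Or.inl (huv.symm.unique hvw)]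

theorem mk_eq_mk_iff :
    Quotient.mk (gasketSetoid G (n + 1)) u = Quotient.mk _ v ↔ u = v ∨ Linked G u v := by
  refine ⟨fun h => ?_, ?_⟩
  · refine equivalence_eq_or_linked.eqvGen_iff.mp (Relation.EqvGen.mono ?_ _ _ (Quotient.eq.mp h))
    exact fun _ _ hl => Or.inr (linking_iff_linked.mp hl)
  · rintro (rfl | h)
    exacts [rfl, Quotient.sound (Relation.EqvGen.rel _ _ (linking_iff_linked.mpr h))]

theorem gasket_adj_mk (h : SierAdjAt G (Fin.last n) u v) :
    (gasket G (n + 1)).Adj (Quotient.mk _ u) (Quotient.mk _ v) := by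
  refine ⟨fun huv => ?_, u, v, rfl, rfl, sierAdj_iff_exists_sierAdjAt.mpr ⟨_, h⟩⟩
  rcases mk_eq_mk_iff.mp huv with huv | huv
  · exact h.adj.ne (congrFun huv _)
  · exact not_linked_of_forall_lt_last h.eq_of_lt huv

theorem exists_sierAdjAt_last_of_gasket_adj {x y : Quotient (gasketSetoid G (n + 1))}
    (h : (gasket G (n + 1)).Adj x y) :
    ∃ u v, Quotient.mk _ u = x ∧ Quotient.mk _ v = y ∧ SierAdjAt G (Fin.last n) u v := by
  obtain ⟨hxy, u, v, rfl, rfl, huv⟩ := h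
  obtain ⟨i, huv⟩ := sierAdj_iff_exists_sierAdjAt.mp huv
  rcases (Fin.le_last i).lt_or_eq with hi | rfl
  · exact absurd (mk_eq_mk_iff.mpr (Or.inr ⟨i, hi, huv⟩)) hxy
  · exact ⟨u, v, rfl, rfl, huv⟩

def gasketHom (G : SimpleGraph V) (p : Fin n → V) : G →g gasket G (n + 1) where
  toFun x := Quotient.mk _ (Fin.snoc p x)
  map_rel' {x y} hxy := gasket_adj_mk
    { eq_of_lt := fun j hj => by
        obtain ⟨j, rfl⟩ := Fin.exists_castSucc_eq.mpr hj.ne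
        simp only [Fin.snoc_castSucc]
      adj := by simpa only [Fin.snoc_last] using hxy
      left_of_gt := fun j hj => absurd hj (Fin.le_last j).not_gt
      right_of_gt := fun j hj => absurd hj (Fin.le_last j).not_gt }

theorem exists_cycle_of_sierAdjAt_last {a b : Fin 3 → Fin (n + 1) → V}
    (hab : ∀ k, SierAdjAt G (Fin.last n) (a k) (b k))
    (hba : ∀ k, b k = a (k + 1) ∨ Linked G (b k) (a (k + 1))) :
    ∃ α : Fin 3 → V, ∀ k, G.Adj (α k) (α (k + 1)) := by
  by_cases hlink : ∃ k, Linked G (b k) (a (k + 1))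
  · obtain ⟨m, ⟨k₀, hm, hk₀⟩, hmin⟩ := wellFounded_lt.has_min
      {p | ∃ k, p < Fin.last n ∧ SierAdjAt G p (b k) (a (k + 1))}
      (let ⟨k, p, hp, h⟩ := hlink; ⟨p, k, hp, h⟩)
    have hb : ∀ k, b k m = a k m := fun k => ((hab k).eq_of_lt m hm).symm
    have step : ∀ k, b k m = a (k + 1) m ∨ SierAdjAt G m (b k) (a (k + 1)) := fun k => by
      rcases hba k with h | ⟨p, hp, h⟩
      · exact Or.inl (congrFun h m)
      · rcases (not_lt.mp (hmin p ⟨k, hp, h⟩)).lt_or_eq with hmp | rfl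
        exacts [Or.inl (h.eq_of_lt m hmp), Or.inr h]
    refine ⟨fun k => a k m, adj_of_cyclic_steps (A := fun k => a k (Fin.last n))
      (B := fun k => b k (Fin.last n)) (fun k => (hab k).adj) (fun k => ?_) ⟨k₀, ?_⟩⟩
    · rcases step k with h | h
      · exact Or.inl ((hb k).symm.trans h)
      · refine Or.inr ⟨hb k ▸ h.adj, ?_, h.left_of_gt _ hm⟩
        exact (h.right_of_gt _ hm).trans (hb k)
    · exact hb k₀ ▸ hk₀.adj.ne
  · refine ⟨fun k => a k (Fin.last n), fun k => ?_⟩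
    simpa only [(hba k).resolve_right (not_exists.mp hlink k)] using (hab k).adj

theorem cliqueFree_three_gasket_iff : (gasket G (n + 1)).CliqueFree 3 ↔ G.CliqueFree 3 := by
  rw [← not_iff_not, not_cliqueFree_three_iff, not_cliqueFree_three_iff]
  constructor
  · rintro ⟨x, hx⟩
    choose u v hu hv huv using fun k => exists_sierAdjAt_last_of_gasket_adj (hx k)
    exact exists_cycle_of_sierAdjAt_last huv fun k =>
      mk_eq_mk_iff.mp ((hv k).trans (hu (k + 1)).symm)
  · rintro ⟨α, hα⟩
    exact ⟨gasketHom G (fun _ => α 0) ∘ α, fun k => (gasketHom G _).map_adj (hα k)⟩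

end Gasket

/-- `G` contains a triangle iff `S[G,t]` contains a triangle, for every `t ≥ 1`. -/
theorem stmt_9 (G : SimpleGraph V) (t : ℕ) (ht : 1 ≤ t) :
    ¬ G.CliqueFree 3 ↔ ¬ (gasket G t).CliqueFree 3 := by
  obtain ⟨n, rfl⟩ : ∃ n, t = n + 1 := ⟨t - 1, by omega⟩
  exact not_congr cliqueFree_three_gasket_iff.symm
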